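/- In an archimedean hoop, if y = x → y then x = 0 or y = 0; consequently every simple hoop (equivalently, every archimedean hoop) is linearly ordered. -/
import Mathlib


/-- A pocrim: commutative monoid (z, ad) with residuation operation im,
    ordered by `x ≥ y iff im x y = z`. -/
class Pocrim (M : Type*) where
  z : M
  ad : M → M → M
  im : M → M → M
  ad_assoc : ∀ x y w : M, ad (ad x y) w = ad x (ad y w)
  ad_comm : ∀ x y : M, ad x y = ad y x
  ad_zero : ∀ x : M, ad x z = x
  ge_refl : ∀ x : M, im x x = z
  ge_trans : ∀ x y w : M, im x y = z → im y w = z → im x w = z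
  ge_antisymm : ∀ x y : M, im x y = z → im y x = z → x = y
  ad_mono : ∀ x y w : M, im x y = z → im (ad x w) (ad y w) = z
  ge_zero : ∀ x : M, im x z = z
  resid : ∀ x y w : M, (im (ad x y) w = z ↔ im x (im y w) = z)

namespace Pocrim

variable {M : Type*} [Pocrim M]

/-- `ge x y` means x ≥ y, i.e. x → y = 0. -/
def ge (x y : M) : Prop := im x y = z

end Pocrim

open Pocrim

/-- A hoop is a pocrim satisfying x + (x → y) = y + (y → x). -/
class Hoop (M : Type*) extends Pocrim M where
  cwc : ∀ x y : M, ad x (im x y) = ad y (im y x)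

/-- m-fold sum. -/
def nsm {M : Type*} [Pocrim M] : ℕ → M → M
  | 0, _ => z
  | n + 1, x => ad x (nsm n x)

section PocrimLemmas

variable {M : Type*} [Pocrim M]

/-- x + y ≥ x -/
lemma hoopaux_ge_ad_left (x y : M) : im (ad x y) x = z := by
  have h : im y (im x x) = z := by rw [Pocrim.ge_refl]; exact Pocrim.ge_zero y
  have h2 := (Pocrim.resid y x x).mpr h
  rwa [Pocrim.ad_comm] at h2

/-- y ≥ x → y -/
lemma hoopaux_F1 (x y : M) : im y (im x y) = z :=
  (Pocrim.resid y x y).mp (hoopaux_ge_ad_left y x)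

/-- x + (x → y) ≥ y -/
lemma hoopaux_F2 (x y : M) : im (ad x (im x y)) y = z := by
  have h2 := (Pocrim.resid (im x y) x y).mpr (Pocrim.ge_refl (im x y))
  rwa [Pocrim.ad_comm] at h2

/-- 0 → y = y -/
lemma hoopaux_im_z_left (y : M) : im z y = y := by
  apply Pocrim.ge_antisymm
  · have h := (Pocrim.resid (im z y) z y).mpr (Pocrim.ge_refl (im z y))
    rwa [Pocrim.ad_zero] at h
  · exact hoopaux_F1 z y

/-- (x + y) → w = x → (y → w) -/
lemma hoopaux_im_ad (x y w : M) : im (ad x y) w = im x (im y w) := by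
  apply Pocrim.ge_antisymm
  · apply (Pocrim.resid _ x (im y w)).mp
    apply (Pocrim.resid _ y w).mp
    have h1 : im (ad (im (ad x y) w) (ad x y)) w = z :=
      (Pocrim.resid _ (ad x y) w).mpr (Pocrim.ge_refl _)
    rwa [← Pocrim.ad_assoc] at h1
  · apply (Pocrim.resid _ (ad x y) w).mp
    have h1 : im (ad (ad (im x (im y w)) x) y) w = z := by
      apply (Pocrim.resid _ y w).mpr
      apply (Pocrim.resid _ x (im y w)).mpr
      exact Pocrim.ge_refl _
    rwa [Pocrim.ad_assoc] at h1

/-- monotonicity of im in the second argument -/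
lemma hoopaux_immono {y' y : M} (w : M) (h : im y' y = z) :
    im (im w y') (im w y) = z := by
  apply (Pocrim.resid (im w y') w y).mp
  have h3 := Pocrim.ge_trans _ _ _ (hoopaux_F2 w y') h
  rwa [Pocrim.ad_comm] at h3

/-- monotonicity of nsm -/
lemma hoopaux_nsm_mono {x y : M} (m : ℕ) (h : im x y = z) :
    im (nsm m x) (nsm m y) = z := by
  induction m with
  | zero => exact Pocrim.ge_refl z
  | succ n ih =>
      show im (ad x (nsm n x)) (ad y (nsm n y)) = z
      have h1 : im (ad x (nsm n x)) (ad y (nsm n x)) = z :=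
        Pocrim.ad_mono x y (nsm n x) h
      have h2 : im (ad y (nsm n x)) (ad y (nsm n y)) = z := by
        have h' := Pocrim.ad_mono (nsm n x) (nsm n y) y ih
        rwa [Pocrim.ad_comm (nsm n x) y, Pocrim.ad_comm (nsm n y) y] at h'
      exact Pocrim.ge_trans _ _ _ h1 h2

/-- if y = x → y then y = (m·x) → y -/
lemma hoopaux_fixpt {x y : M} (hxy : y = im x y) : ∀ m : ℕ, im (nsm m x) y = y
  | 0 => hoopaux_im_z_left y
  | (m + 1) => by
      show im (ad x (nsm m x)) y = y
      rw [hoopaux_im_ad, hoopaux_fixpt hxy m]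
      exact hxy.symm

end PocrimLemmas

section HoopLemmas

variable {M : Type*} [Hoop M]

/-- divisibility: if x ≥ y then x = y + (y → x) -/
lemma hoopaux_div {x y : M} (h : im x y = z) : ad y (im y x) = x := by
  have hc := Hoop.cwc y x
  rw [hc, h, Pocrim.ad_zero]

/-- key lemma: if (a → b) ≥ (b → a) then b ≥ a -/
lemma hoopaux_key {a b : M} (h : im (im a b) (im b a) = z) : im b a = z := by
  set w := im a b with hw
  have hbw : im (ad b w) a = z := by
    have h1 : im (ad w b) (ad (im b a) b) = z := Pocrim.ad_mono _ _ b h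
    rw [Pocrim.ad_comm w b, Pocrim.ad_comm (im b a) b] at h1
    exact Pocrim.ge_trans _ _ _ h1 (hoopaux_F2 b a)
  set p := im w a with hp
  have hap : im a p = z := hoopaux_F1 w a
  have hbp : im b p = z := (Pocrim.resid b w a).mp hbw
  have ha : ad p (im p a) = a := hoopaux_div hap
  have hb : ad p (im p b) = b := hoopaux_div hbp
  have hwq : im w (im p a) = z := (Pocrim.resid w p a).mp (hoopaux_F2 w a)
  set q := im p a with hq
  set d := im p b with hd
  have hqd : im (im q d) w = z := by
    apply (Pocrim.resid (im q d) a b).mp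
    have h3 : im (ad (ad q (im q d)) p) (ad d p) = z :=
      Pocrim.ad_mono _ _ p (hoopaux_F2 q d)
    have hX : ad (im q d) a = ad (ad q (im q d)) p := by
      rw [← ha]
      rw [← Pocrim.ad_assoc (im q d) p q, Pocrim.ad_comm (im q d) p,
          Pocrim.ad_assoc p (im q d) q, Pocrim.ad_comm (im q d) q,
          Pocrim.ad_comm p (ad q (im q d))]
    rw [hX, ← hb, Pocrim.ad_comm p d]
    exact h3
  have hdq : im d q = z := by
    have h5 : im d (im q d) = z := hoopaux_F1 q d
    exact Pocrim.ge_trans _ _ _ (Pocrim.ge_trans _ _ _ h5 hqd) hwq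
  have h7 : im (ad d p) (ad q p) = z := Pocrim.ad_mono _ _ p hdq
  rw [Pocrim.ad_comm d p, Pocrim.ad_comm q p, ha, hb] at h7
  exact h7

/-- induction: if m·(a→b) ≥ (b→a) then a ≥ b or b ≥ a -/
lemma hoopaux_ind : ∀ m : ℕ, ∀ a b : M,
    im (nsm m (im a b)) (im b a) = z → im a b = z ∨ im b a = z := by
  intro m
  induction m with
  | zero =>
      intro a b h
      right
      have h' : im z (im b a) = z := h
      rwa [hoopaux_im_z_left] at h'
  | succ m ih =>
      intro a b h
      have hb1b : im (ad b (im a b)) b = z := hoopaux_ge_ad_left b (im a b)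
      have hv1 : im (ad b (im a b)) a = im (im a b) (im b a) := by
        rw [Pocrim.ad_comm b (im a b), hoopaux_im_ad]
      have hm : im (nsm m (im a b)) (im (im a b) (im b a)) = z := by
        have h' : im (ad (nsm m (im a b)) (im a b)) (im b a) = z := by
          rw [Pocrim.ad_comm]; exact h
        exact (Pocrim.resid (nsm m (im a b)) (im a b) (im b a)).mp h'
      have hu1 : im (im a (ad b (im a b))) (im a b) = z := hoopaux_immono a hb1b
      have hnm : im (nsm m (im a (ad b (im a b)))) (im (ad b (im a b)) a) = z := by
        have h8 : im (nsm m (im a (ad b (im a b)))) (nsm m (im a b)) = z :=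
          hoopaux_nsm_mono m hu1
        have h9 := Pocrim.ge_trans _ _ _ h8 hm
        rwa [← hv1] at h9
      rcases ih a (ad b (im a b)) hnm with hL | hR
      · left
        exact Pocrim.ge_trans _ _ _ hL hb1b
      · right
        rw [hv1] at hR
        exact hoopaux_key hR

end HoopLemmas

theorem archimedean_hoop_linear {M : Type*} [Hoop M]
    (harch : ∀ x y : M, x ≠ z → ∃ m : ℕ, ge (nsm m x) y) :
    (∀ x y : M, y = im x y → x = z ∨ y = z) ∧
    (∀ a b : M, ge a b ∨ ge b a) := by
  constructor
  · intro x y hxy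
    by_cases hx : x = z
    · exact Or.inl hx
    · right
      obtain ⟨m, hm⟩ := harch x y hx
      have hm' : im (nsm m x) y = z := hm
      rwa [hoopaux_fixpt hxy m] at hm'
  · intro a b
    by_cases hu : im a b = z
    · exact Or.inl hu
    · obtain ⟨m, hm⟩ := harch (im a b) (im b a) hu
      have hm' : im (nsm m (im a b)) (im b a) = z := hm
      rcases hoopaux_ind m a b hm' with hL | hR
      · exact Or.inl hL
      · exact Or.inr hR
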